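/- (Certified robustness of the Espresso filter, Theorem 1.) Let E be a real inner product space, τ > 0, c^u, c^a ∈ E nonzero, and g(x) := exp(τ·cos(x,c^u)) / (exp(τ·cos(x,c^u)) + exp(τ·cos(x,c^a))) where cos(x,c) := ⟪x, c⟫ / (‖x‖ · ‖c‖). Let Γ ∈ ℝ, let x ∈ E be nonzero with g(x) > Γ. Then for every δ ∈ E with ‖δ‖ ≤ (1 − τ/(τ + 2·(g(x) − Γ))) · ‖x‖, one has g(x + δ) ≥ Γ; that is, the filter's decision g(·) > Γ vs. g(·) ≤ Γ is not flipped from 'above threshold' by any perturbation of norm at most (1 − τ/(τ + 2·|g(x) − Γ|)) · ‖x‖. -/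

import Mathlib

/-- Cosine similarity of two vectors in a real inner product space. -/
noncomputable def cosSim {E : Type*} [NormedAddCommGroup E] [InnerProductSpace ℝ E]
    (x c : E) : ℝ :=
  (inner ℝ x c : ℝ) / (‖x‖ * ‖c‖)

/-- The Espresso confidence function
`g(x) = exp(τ·cos(x,cᵘ)) / (exp(τ·cos(x,cᵘ)) + exp(τ·cos(x,cᵃ)))`. -/
noncomputable def espressoG {E : Type*} [NormedAddCommGroup E] [InnerProductSpace ℝ E]
    (τ : ℝ) (cu ca : E) (x : E) : ℝ :=
  Real.exp (τ * cosSim x cu) /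
    (Real.exp (τ * cosSim x cu) + Real.exp (τ * cosSim x ca))

/-!
Writing `g = σ (τ (cos(·, cᵘ) - cos(·, cᵃ)))` with the logistic sigmoid `σ`, which is
`1/4`-Lipschitz, and bounding each change of cosine similarity by the distance of the
normalized vectors gives `|g(x + δ) - g(x)| ≤ τ/2 · ‖(x + δ)/‖x + δ‖ - x/‖x‖‖`.
By the Dunkl–Williams inequality that distance is at most `‖δ‖ / (‖x‖ - ‖δ‖)`, and the
radius in the hypothesis is exactly the one making `τ/2 · ‖δ‖ / (‖x‖ - ‖δ‖) ≤ g(x) - Γ`.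
-/

open Real RealInnerProductSpace

namespace Real

lemma sigmoid_mul_one_sub_sigmoid_le (t : ℝ) : sigmoid t * (1 - sigmoid t) ≤ 1 / 4 := by
  nlinarith [sq_nonneg (2 * sigmoid t - 1)]

lemma lipschitzWith_sigmoid : LipschitzWith (1 / 4) sigmoid := by
  refine lipschitzWith_of_nnnorm_deriv_le differentiable_sigmoid fun t ↦ ?_
  rw [← NNReal.coe_le_coe, coe_nnnorm, deriv_sigmoid, Real.norm_of_nonneg
    (mul_nonneg (sigmoid_nonneg t) (sub_nonneg.2 (sigmoid_le_one t)))]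
  exact_mod_cast sigmoid_mul_one_sub_sigmoid_le t

lemma abs_sigmoid_sub_sigmoid_le (s t : ℝ) : |sigmoid s - sigmoid t| ≤ |s - t| / 4 := by
  have := lipschitzWith_sigmoid.dist_le_mul s t
  rw [Real.dist_eq, Real.dist_eq] at this
  push_cast at this
  linarith

end Real

section InnerProductSpace

variable {E : Type*} [NormedAddCommGroup E] [InnerProductSpace ℝ E]

lemma norm_inv_norm_smul_le_one (c : E) : ‖‖c‖⁻¹ • c‖ ≤ 1 := by
  rw [norm_smul, norm_inv, norm_norm]
  exact inv_mul_le_one_of_le₀ le_rfl (norm_nonneg c)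

/-- The Dunkl–Williams inequality. -/
theorem norm_inv_norm_smul_sub_inv_norm_smul_le {x y : E} (hx : x ≠ 0) (hy : y ≠ 0) :
    ‖‖x‖⁻¹ • x - ‖y‖⁻¹ • y‖ ≤ 2 * ‖x - y‖ / (‖x‖ + ‖y‖) := by
  have ha : 0 < ‖x‖ := norm_pos_iff.2 hx
  have hb : 0 < ‖y‖ := norm_pos_iff.2 hy
  have hp : -(‖x‖ * ‖y‖) ≤ ⟪x, y⟫ := neg_le_of_abs_le (abs_real_inner_le_norm x y)
  have hunit : ‖‖x‖⁻¹ • x - ‖y‖⁻¹ • y‖ ^ 2 * (‖x‖ * ‖y‖) = 2 * (‖x‖ * ‖y‖) - 2 * ⟪x, y⟫ := by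
    rw [norm_sub_sq_real, real_inner_smul_left, real_inner_smul_right]
    simp only [norm_smul, norm_inv, norm_norm]
    field_simp
    ring
  rw [le_div_iff₀ (by positivity),
    ← pow_le_pow_iff_left₀ (by positivity) (by positivity) two_ne_zero,
    ← mul_le_mul_iff_of_pos_left (mul_pos ha hb), mul_pow, mul_pow, norm_sub_sq_real x y]
  -- the gap is `2 (‖x‖‖y‖ + ⟪x, y⟫) (‖x‖ - ‖y‖)²`
  nlinarith [mul_nonneg (neg_le_iff_add_nonneg.1 hp) (sq_nonneg (‖x‖ - ‖y‖))]

lemma norm_inv_norm_smul_add_sub_le {x : E} (hx : x ≠ 0) {δ : E} (hδ : ‖δ‖ < ‖x‖) :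
    ‖‖x + δ‖⁻¹ • (x + δ) - ‖x‖⁻¹ • x‖ ≤ ‖δ‖ / (‖x‖ - ‖δ‖) := by
  have hxδ : ‖x‖ - ‖δ‖ ≤ ‖x + δ‖ := by simpa using norm_sub_norm_le x (-δ)
  have hxδ₀ : x + δ ≠ 0 := norm_pos_iff.1 (by linarith)
  calc ‖‖x + δ‖⁻¹ • (x + δ) - ‖x‖⁻¹ • x‖ ≤ 2 * ‖x + δ - x‖ / (‖x + δ‖ + ‖x‖) :=
        norm_inv_norm_smul_sub_inv_norm_smul_le hxδ₀ hx
    _ ≤ 2 * ‖δ‖ / (2 * (‖x‖ - ‖δ‖)) := by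
        rw [add_sub_cancel_left]
        gcongr
        linarith [norm_nonneg δ]
    _ = ‖δ‖ / (‖x‖ - ‖δ‖) := mul_div_mul_left _ _ two_ne_zero

lemma cosSim_eq_inner (x c : E) : cosSim x c = ⟪‖x‖⁻¹ • x, ‖c‖⁻¹ • c⟫ := by
  rw [real_inner_smul_left, real_inner_smul_right, cosSim, div_eq_inv_mul, mul_inv, mul_assoc]

lemma abs_cosSim_sub_cosSim_le (x y c : E) :
    |cosSim y c - cosSim x c| ≤ ‖‖y‖⁻¹ • y - ‖x‖⁻¹ • x‖ := by
  rw [cosSim_eq_inner, cosSim_eq_inner, ← inner_sub_left]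
  exact (abs_real_inner_le_norm _ _).trans
    (mul_le_of_le_one_right (norm_nonneg _) (norm_inv_norm_smul_le_one c))

lemma espressoG_eq_sigmoid (τ : ℝ) (cu ca x : E) :
    espressoG τ cu ca x = sigmoid (τ * (cosSim x cu - cosSim x ca)) := by
  rw [espressoG, sigmoid_def, mul_sub, neg_sub, exp_sub]
  field_simp

lemma abs_espressoG_sub_espressoG_le {τ : ℝ} (hτ : 0 ≤ τ) (cu ca x y : E) :
    |espressoG τ cu ca y - espressoG τ cu ca x| ≤ τ / 2 * ‖‖y‖⁻¹ • y - ‖x‖⁻¹ • x‖ := by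
  rw [espressoG_eq_sigmoid, espressoG_eq_sigmoid]
  refine (abs_sigmoid_sub_sigmoid_le _ _).trans ?_
  have hdiff : |(cosSim y cu - cosSim y ca) - (cosSim x cu - cosSim x ca)|
      ≤ 2 * ‖‖y‖⁻¹ • y - ‖x‖⁻¹ • x‖ := by
    calc _ = |(cosSim y cu - cosSim x cu) - (cosSim y ca - cosSim x ca)| := by ring_nf
      _ ≤ |cosSim y cu - cosSim x cu| + |cosSim y ca - cosSim x ca| := abs_sub _ _
      _ ≤ 2 * ‖‖y‖⁻¹ • y - ‖x‖⁻¹ • x‖ := by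
        linarith [abs_cosSim_sub_cosSim_le x y cu, abs_cosSim_sub_cosSim_le x y ca]
  rw [← mul_sub, abs_mul, abs_of_nonneg hτ]
  linarith [mul_le_mul_of_nonneg_left hdiff hτ]

end InnerProductSpace

theorem espresso_certified_robustness_general
    {E : Type*} [NormedAddCommGroup E] [InnerProductSpace ℝ E]
    (τ : ℝ) (hτ : 0 < τ) (cu ca : E)
    (Γ : ℝ) (x : E) (hx : x ≠ 0) (hgx : Γ < espressoG τ cu ca x) :
    ∀ δ : E,
      ‖δ‖ ≤ (1 - τ / (τ + 2 * (espressoG τ cu ca x - Γ))) * ‖x‖ →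
      Γ ≤ espressoG τ cu ca (x + δ) := by
  intro δ hδ
  set ε := espressoG τ cu ca x - Γ
  have hε : 0 < ε := sub_pos.2 hgx
  have hx₀ : 0 < ‖x‖ := norm_pos_iff.2 hx
  have hδ' : (τ + 2 * ε) * ‖δ‖ ≤ 2 * ε * ‖x‖ := by
    rw [one_sub_div (by positivity), add_sub_cancel_left, div_mul_eq_mul_div,
      le_div_iff₀ (by positivity)] at hδ
    linarith
  have hδx : ‖δ‖ < ‖x‖ := by nlinarith
  have hgap : τ / 2 * (‖δ‖ / (‖x‖ - ‖δ‖)) ≤ ε := by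
    rw [← mul_div_assoc, div_le_iff₀ (by linarith)]
    linarith
  have hclose := abs_le.1 (abs_espressoG_sub_espressoG_le hτ.le cu ca x (x + δ))
  linarith [hclose.1,
    mul_le_mul_of_nonneg_left (norm_inv_norm_smul_add_sub_le hx hδx) (half_pos hτ).le]

/-- Certified robustness of the Espresso filter (Theorem 1). -/
theorem espresso_certified_robustness
    {E : Type*} [NormedAddCommGroup E] [InnerProductSpace ℝ E] [CompleteSpace E]
    (τ : ℝ) (hτ : 0 < τ) (cu ca : E) (hcu : cu ≠ 0) (hca : ca ≠ 0)
    (Γ : ℝ) (x : E) (hx : x ≠ 0) (hgx : Γ < espressoG τ cu ca x) :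
    ∀ δ : E,
      ‖δ‖ ≤ (1 - τ / (τ + 2 * (espressoG τ cu ca x - Γ))) * ‖x‖ →
      Γ ≤ espressoG τ cu ca (x + δ) :=
  espresso_certified_robustness_general τ hτ cu ca Γ x hx hgx
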